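/- arXiv:1310.6534 — 2 statements merged into one kernel-verified Lean document; each statement's English description precedes it below -/
import Mathlib

section
/- Let K_n be the rectangle conv{(±n,0),(±n,1)} for n ∈ ℕ. Then ((D(K_n)-1)/D(K_n))(p(K_n) - 2D(K_n)) = (2√(n²+1/4) - 1)/(2√(n²+1/4)) · (4n + 2 - 4√(n²+1/4)), and this quantity tends to 2 as n → ∞. -/
/-
The frontier of the rectangle `[-n, n] × [0, 1]` consists of two horizontal and two vertical sides,
each an isometric copy of an interval, so each has one-dimensional Hausdorff measure equal to its
length; the sides meet only at the four corners, a null set, hence `p(K_n) = 4n + 2`. The diameter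
is the diagonal `D = √(4n² + 1)`. As `n → ∞`, `(D - 1) / D → 1` and
`p - 2D = 2 - 2 (D - 2n)` with `D - 2n = 1 / (D + 2n) → 0`, so the product tends to `2`.
-/

open MeasureTheory Metric Set Filter
open scoped Topology RealInnerProductSpace

noncomputable def perim (K : Set (EuclideanSpace ℝ (Fin 2))) : ℝ :=
  (μH[1] (frontier K)).toReal

noncomputable def circum (K : Set (EuclideanSpace ℝ (Fin 2))) : ℝ :=
  sInf {r : ℝ | ∃ c, K ⊆ Metric.closedBall c r}

noncomputable def inrad (K : Set (EuclideanSpace ℝ (Fin 2))) : ℝ :=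
  sSup {r : ℝ | ∃ c, Metric.closedBall c r ⊆ K}

noncomputable def minWidth (K : Set (EuclideanSpace ℝ (Fin 2))) : ℝ :=
  sInf {w : ℝ | ∃ u : EuclideanSpace ℝ (Fin 2), ‖u‖ = 1 ∧
    w = sSup ((fun x => ⟪u, x⟫) '' K) - sInf ((fun x => ⟪u, x⟫) '' K)}

def LatticeFree (K : Set (EuclideanSpace ℝ (Fin 2))) : Prop :=
  ∀ m n : ℤ, (WithLp.toLp 2 ![(m : ℝ), (n : ℝ)] : EuclideanSpace ℝ (Fin 2)) ∉ interior K

def Unconditional (K : Set (EuclideanSpace ℝ (Fin 2))) (z : EuclideanSpace ℝ (Fin 2)) : Prop :=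
  (∀ x ∈ K, (WithLp.toLp 2 ![x 0, 2 * z 1 - x 1] : EuclideanSpace ℝ (Fin 2)) ∈ K) ∧
  (∀ x ∈ K, (WithLp.toLp 2 ![2 * z 0 - x 0, x 1] : EuclideanSpace ℝ (Fin 2)) ∈ K)

def rect (a b c d : ℝ) : Set (EuclideanSpace ℝ (Fin 2)) :=
  {x | x 0 ∈ Icc a b ∧ x 1 ∈ Icc c d}

noncomputable def planeToProd : EuclideanSpace ℝ (Fin 2) ≃ₜ ℝ × ℝ :=
  ((EuclideanSpace.equiv (Fin 2) ℝ).trans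
    (ContinuousLinearEquiv.finTwoArrow ℝ ℝ)).toHomeomorph

@[simp] lemma planeToProd_apply (x : EuclideanSpace ℝ (Fin 2)) :
    planeToProd x = (x 0, x 1) := rfl

lemma rect_eq_preimage (a b c d : ℝ) :
    rect a b c d = planeToProd ⁻¹' (Icc a b ×ˢ Icc c d) := rfl

lemma dist_eq_sqrt_fin_two (x y : EuclideanSpace ℝ (Fin 2)) :
    dist x y = √((x 0 - y 0) ^ 2 + (x 1 - y 1) ^ 2) := by
  simp [EuclideanSpace.dist_eq, Fin.sum_univ_two, Real.dist_eq, sq_abs]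

lemma isometry_horizontal (y : ℝ) : Isometry (fun t : ℝ => !₂[t, y]) :=
  Isometry.of_dist_eq fun s t => by
    simp [dist_eq_sqrt_fin_two, Real.dist_eq, Real.sqrt_sq_eq_abs]

lemma isometry_vertical (x : ℝ) : Isometry (fun t : ℝ => !₂[x, t]) :=
  Isometry.of_dist_eq fun s t => by
    simp [dist_eq_sqrt_fin_two, Real.dist_eq, Real.sqrt_sq_eq_abs]

lemma frontier_rect {a b c d : ℝ} (hab : a ≤ b) (hcd : c ≤ d) :
    frontier (rect a b c d) =
      planeToProd ⁻¹' (Icc a b ×ˢ {c, d}) ∪ planeToProd ⁻¹' ({a, b} ×ˢ Icc c d) := by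
  rw [rect_eq_preimage, ← Homeomorph.preimage_frontier, frontier_prod_eq, closure_Icc,
    closure_Icc, frontier_Icc hab, frontier_Icc hcd, preimage_union]

lemma hausdorffMeasure_image_Icc {E : Type*} [EMetricSpace E] [MeasurableSpace E] [BorelSpace E]
    {f : ℝ → E} (hf : Isometry f) (a b : ℝ) :
    μH[1] (f '' Icc a b) = ENNReal.ofReal (b - a) := by
  rw [hf.hausdorffMeasure_image (Or.inl zero_le_one), hausdorffMeasure_real, Real.volume_Icc]

lemma hausdorffMeasure_union_image_Icc {E : Type*} [EMetricSpace E] [MeasurableSpace E]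
    [BorelSpace E] {f g : ℝ → E} (hf : Isometry f) (hg : Isometry g)
    (hfg : Disjoint (range f) (range g)) (a b : ℝ) :
    μH[1] (f '' Icc a b ∪ g '' Icc a b) = 2 * ENNReal.ofReal (b - a) := by
  rw [measure_union (hfg.mono (image_subset_range _ _) (image_subset_range _ _))
    (isCompact_Icc.image hg.continuous).isClosed.measurableSet,
    hausdorffMeasure_image_Icc hf, hausdorffMeasure_image_Icc hg, two_mul]

lemma preimage_planeToProd_Icc_prod_pair (a b c d : ℝ) :
    planeToProd ⁻¹' (Icc a b ×ˢ {c, d}) =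
      (fun t => !₂[t, c]) '' Icc a b ∪ (fun t => !₂[t, d]) '' Icc a b := by
  ext x
  simp only [mem_preimage, planeToProd_apply, mem_prod, mem_insert_iff, mem_singleton_iff]
  constructor
  · rintro ⟨hx, h | h⟩
    exacts [.inl ⟨x 0, hx, by ext i; fin_cases i <;> simp [h]⟩,
      .inr ⟨x 0, hx, by ext i; fin_cases i <;> simp [h]⟩]
  · rintro (⟨t, ht, rfl⟩ | ⟨t, ht, rfl⟩) <;> simp [ht]

lemma preimage_planeToProd_pair_prod_Icc (a b c d : ℝ) :
    planeToProd ⁻¹' ({a, b} ×ˢ Icc c d) =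
      (fun t => !₂[a, t]) '' Icc c d ∪ (fun t => !₂[b, t]) '' Icc c d := by
  ext x
  simp only [mem_preimage, planeToProd_apply, mem_prod, mem_insert_iff, mem_singleton_iff]
  constructor
  · rintro ⟨h | h, hx⟩
    exacts [.inl ⟨x 1, hx, by ext i; fin_cases i <;> simp [h]⟩,
      .inr ⟨x 1, hx, by ext i; fin_cases i <;> simp [h]⟩]
  · rintro (⟨t, ht, rfl⟩ | ⟨t, ht, rfl⟩) <;> simp [ht]

lemma disjoint_range_horizontal {c d : ℝ} (h : c ≠ d) :
    Disjoint (range fun t : ℝ => !₂[t, c]) (range fun t : ℝ => !₂[t, d]) := by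
  rw [disjoint_iff_forall_ne]
  rintro _ ⟨s, rfl⟩ _ ⟨t, rfl⟩ hst
  exact h (by simpa using congrArg (· 1) hst)

lemma disjoint_range_vertical {a b : ℝ} (h : a ≠ b) :
    Disjoint (range fun t : ℝ => !₂[a, t]) (range fun t : ℝ => !₂[b, t]) := by
  rw [disjoint_iff_forall_ne]
  rintro _ ⟨s, rfl⟩ _ ⟨t, rfl⟩ hst
  exact h (by simpa using congrArg (· 0) hst)

lemma perim_rect {a b c d : ℝ} (hab : a < b) (hcd : c < d) :
    perim (rect a b c d) = 2 * (b - a) + 2 * (d - c) := by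
  have := Measure.nullSingletonClass_hausdorff (EuclideanSpace ℝ (Fin 2)) one_pos
  have hcorners : (planeToProd ⁻¹' ({a, b} ×ˢ {c, d})).Finite :=
    ((toFinite _).prod (toFinite _)).preimage planeToProd.injective.injOn
  have hsides : AEDisjoint μH[1] (planeToProd ⁻¹' (Icc a b ×ˢ {c, d}))
      (planeToProd ⁻¹' ({a, b} ×ˢ Icc c d)) := by
    refine measure_mono_null ?_ (hcorners.measure_zero _)
    rw [← preimage_inter, prod_inter_prod]
    exact preimage_mono (prod_mono inter_subset_right inter_subset_left)
  have hvert : MeasurableSet (planeToProd ⁻¹' ({a, b} ×ˢ Icc c d)) :=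
    (((toFinite _).isClosed.prod isClosed_Icc).preimage planeToProd.continuous).measurableSet
  rw [perim, frontier_rect hab.le hcd.le, measure_union₀ hvert.nullMeasurableSet hsides,
    preimage_planeToProd_Icc_prod_pair, preimage_planeToProd_pair_prod_Icc,
    hausdorffMeasure_union_image_Icc (isometry_horizontal c) (isometry_horizontal d)
      (disjoint_range_horizontal hcd.ne),
    hausdorffMeasure_union_image_Icc (isometry_vertical a) (isometry_vertical b)
      (disjoint_range_vertical hab.ne), ENNReal.toReal_add (by finiteness) (by finiteness)]
  simp [hab.le, hcd.le]

lemma diam_rect {a b c d : ℝ} (hab : a ≤ b) (hcd : c ≤ d) :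
    diam (rect a b c d) = √((b - a) ^ 2 + (d - c) ^ 2) := by
  refine le_antisymm (diam_le_of_forall_dist_le (Real.sqrt_nonneg _) ?_) ?_
  · rintro x ⟨⟨hx0, hx0'⟩, hx1, hx1'⟩ y ⟨⟨hy0, hy0'⟩, hy1, hy1'⟩
    rw [dist_eq_sqrt_fin_two]
    gcongr √(?_ + ?_) <;> apply sq_le_sq' <;> linarith
  · have hbdd : Bornology.IsBounded (rect a b c d) :=
      (planeToProd.isCompact_preimage.2 (isCompact_Icc.prod isCompact_Icc)).isBounded
    have hmem : ∀ {x y}, x ∈ Icc a b → y ∈ Icc c d → !₂[x, y] ∈ rect a b c d :=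
      fun hx hy => ⟨hx, hy⟩
    calc √((b - a) ^ 2 + (d - c) ^ 2) = dist !₂[b, d] !₂[a, c] := by
          simp [dist_eq_sqrt_fin_two]
      _ ≤ diam (rect a b c d) :=
          dist_le_diam_of_mem hbdd (hmem (right_mem_Icc.2 hab) (right_mem_Icc.2 hcd))
            (hmem (left_mem_Icc.2 hab) (left_mem_Icc.2 hcd))

lemma tendsto_sqrt_sq_add_one_atTop : Tendsto (fun x : ℝ => √(x ^ 2 + 1)) atTop atTop :=
  tendsto_atTop_mono (fun _ => Real.le_sqrt_of_sq_le (le_add_of_nonneg_right zero_le_one))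
    tendsto_id

lemma tendsto_sqrt_sq_add_one_sub_self :
    Tendsto (fun x : ℝ => √(x ^ 2 + 1) - x) atTop (𝓝 0) := by
  refine (tendsto_sqrt_sq_add_one_atTop.atTop_add_atTop tendsto_id).inv_tendsto_atTop.congr' ?_
  filter_upwards [eventually_ge_atTop 0] with x hx
  have hD : √(x ^ 2 + 1) ^ 2 = x ^ 2 + 1 := Real.sq_sqrt (by positivity)
  have hpos : 0 < √(x ^ 2 + 1) + x := by positivity
  change (√(x ^ 2 + 1) + x)⁻¹ = √(x ^ 2 + 1) - x
  field_simp
  linear_combination -hD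

/-- With `x = 2n`, `√(x² + 1)` is the diameter and `2x + 2` the perimeter of `K_n`. -/
lemma tendsto_diam_ratio_mul_perim_sub :
    Tendsto (fun x : ℝ =>
      (√(x ^ 2 + 1) - 1) / √(x ^ 2 + 1) * (2 * x + 2 - 2 * √(x ^ 2 + 1))) atTop (𝓝 2) := by
  have hratio : Tendsto (fun x : ℝ => 1 - (√(x ^ 2 + 1))⁻¹) atTop (𝓝 1) := by
    simpa using tendsto_const_nhds.sub tendsto_sqrt_sq_add_one_atTop.inv_tendsto_atTop
  have hexcess : Tendsto (fun x : ℝ => 2 - 2 * (√(x ^ 2 + 1) - x)) atTop (𝓝 2) := by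
    simpa using tendsto_const_nhds.sub (tendsto_sqrt_sq_add_one_sub_self.const_mul 2)
  have hprod := hratio.mul hexcess
  rw [one_mul] at hprod
  refine hprod.congr' ?_
  filter_upwards [eventually_ge_atTop 0] with x hx
  have hpos : 0 < √(x ^ 2 + 1) := by positivity
  field_simp
  ring

theorem stmt_7 (K : ℕ → Set (EuclideanSpace ℝ (Fin 2)))
    (hK : ∀ n, K n = {x | x 0 ∈ Icc (-(n : ℝ)) (n : ℝ) ∧ x 1 ∈ Icc (0 : ℝ) 1}) :
    (∀ n : ℕ, 1 ≤ n →
      (Metric.diam (K n) - 1) / Metric.diam (K n) *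
          (perim (K n) - 2 * Metric.diam (K n)) =
        (2 * Real.sqrt ((n : ℝ) ^ 2 + 1 / 4) - 1) / (2 * Real.sqrt ((n : ℝ) ^ 2 + 1 / 4)) *
          (4 * (n : ℝ) + 2 - 4 * Real.sqrt ((n : ℝ) ^ 2 + 1 / 4))) ∧
    Tendsto (fun n : ℕ =>
        (Metric.diam (K n) - 1) / Metric.diam (K n) *
          (perim (K n) - 2 * Metric.diam (K n))) atTop (𝓝 2) := by
  have hKrect : ∀ n : ℕ, K n = rect (-n) n 0 1 := hK
  have hdiam (n : ℕ) : diam (K n) = √((2 * n) ^ 2 + 1) := by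
    rw [hKrect, diam_rect (neg_le_self n.cast_nonneg) zero_le_one]
    congr 1
    ring
  have hperim (n : ℕ) (hn : 1 ≤ n) : perim (K n) = 2 * (2 * n) + 2 := by
    have hpos : (0 : ℝ) < n := by exact_mod_cast hn
    rw [hKrect, perim_rect (neg_lt_self hpos) zero_lt_one]
    ring
  have hsqrt (n : ℕ) : √((2 * n) ^ 2 + 1) = 2 * √((n : ℝ) ^ 2 + 1 / 4) := by
    rw [show (2 * n : ℝ) ^ 2 + 1 = 2 ^ 2 * ((n : ℝ) ^ 2 + 1 / 4) by ring,
      Real.sqrt_mul (by positivity), Real.sqrt_sq zero_le_two]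
  refine ⟨fun n hn => ?_, ?_⟩
  · rw [hdiam, hperim n hn, hsqrt]
    ring
  · refine (tendsto_diam_ratio_mul_perim_sub.comp
      (tendsto_natCast_atTop_atTop.const_mul_atTop two_pos)).congr' ?_
    filter_upwards [eventually_ge_atTop 1] with n hn
    rw [Function.comp_apply, hdiam, hperim n hn]
end

section
/- For real numbers n ≥ 1, the sequence a_n = ((√(4n²+1) - 1)/√(4n²+1)) · (4n + 2 - 2√(4n²+1)) is strictly less than 2, and a_n → 2 as n → ∞. -/
open MeasureTheory Metric Set Filter
open scoped Topology RealInnerProductSpace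

/-! With `s = √(4n² + 1)` one has `2n < s`, and clearing the denominator `s` turns both
`aSeq n < 2` and the lower bound `2 - 2/n ≤ aSeq n` (for `n > 0`) into polynomial
inequalities in `n` and `s` modulo `s² = 4n² + 1`; the limit follows by squeezing. -/

noncomputable def aSeq (n : ℝ) : ℝ :=
  (Real.sqrt (4 * n ^ 2 + 1) - 1) / Real.sqrt (4 * n ^ 2 + 1) *
    (4 * n + 2 - 2 * Real.sqrt (4 * n ^ 2 + 1))

lemma sq_sqrt_four_mul_sq_add_one (n : ℝ) :
    Real.sqrt (4 * n ^ 2 + 1) ^ 2 = 4 * n ^ 2 + 1 :=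
  Real.sq_sqrt (by positivity)

lemma two_mul_lt_sqrt_four_mul_sq_add_one (n : ℝ) : 2 * n < Real.sqrt (4 * n ^ 2 + 1) :=
  Real.lt_sqrt_of_sq_lt (by linarith)

lemma one_le_sqrt_four_mul_sq_add_one (n : ℝ) : 1 ≤ Real.sqrt (4 * n ^ 2 + 1) :=
  Real.one_le_sqrt.2 (by nlinarith)

lemma aSeq_lt_two (n : ℝ) : aSeq n < 2 := by
  have hs2 := sq_sqrt_four_mul_sq_add_one n
  have hlow := two_mul_lt_sqrt_four_mul_sq_add_one n
  have hs1 := one_le_sqrt_four_mul_sq_add_one n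
  rw [aSeq]
  set s := Real.sqrt (4 * n ^ 2 + 1)
  rw [div_mul_eq_mul_div, div_lt_iff₀ (by linarith)]
  nlinarith

lemma two_sub_two_div_le_aSeq {n : ℝ} (hn : 0 < n) : 2 - 2 / n ≤ aSeq n := by
  have hs2 := sq_sqrt_four_mul_sq_add_one n
  have hlow := two_mul_lt_sqrt_four_mul_sq_add_one n
  rw [aSeq]
  set s := Real.sqrt (4 * n ^ 2 + 1)
  rw [div_mul_eq_mul_div, show 2 - 2 / n = (2 * n - 2) / n by field_simp,
    div_le_div_iff₀ hn (by linarith)]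
  -- the difference of the two sides is `(s - 2n)(4n² + 2n + 2)`
  nlinarith [mul_pos (sub_pos.2 hlow) (by positivity : 0 < 4 * n ^ 2 + 2 * n + 2)]

lemma tendsto_aSeq_atTop : Tendsto aSeq atTop (𝓝 2) := by
  have hlow : Tendsto (fun n : ℝ => 2 - 2 / n) atTop (𝓝 2) := by
    simpa using (tendsto_const_nhds (x := (2 : ℝ))).div_atTop tendsto_id |>.const_sub 2
  refine tendsto_of_tendsto_of_tendsto_of_le_of_le' hlow tendsto_const_nhds ?_
    (Eventually.of_forall aSeq_lt_two |>.mono fun _ => le_of_lt)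
  filter_upwards [eventually_gt_atTop 0] with n hn using two_sub_two_div_le_aSeq hn

theorem stmt_8 :
    (∀ n : ℝ, 1 ≤ n →
      (Real.sqrt (4 * n ^ 2 + 1) - 1) / Real.sqrt (4 * n ^ 2 + 1) *
        (4 * n + 2 - 2 * Real.sqrt (4 * n ^ 2 + 1)) < 2) ∧
    Tendsto (fun n : ℝ =>
      (Real.sqrt (4 * n ^ 2 + 1) - 1) / Real.sqrt (4 * n ^ 2 + 1) *
        (4 * n + 2 - 2 * Real.sqrt (4 * n ^ 2 + 1))) atTop (𝓝 2) :=
  ⟨fun n _ => aSeq_lt_two n, tendsto_aSeq_atTop⟩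
end
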